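/- Let a > 0 and 0 < b < a, let f ∈ C⁰([0,1]) and g ∈ C¹([0,1]). For ε > 0 let k = ⌊√(a² − b²)/(2 a² π ε)⌋, and for an integer m with 1 ≤ m < k and n = k − m define α_{n±} = (−1 ± √((1 − b²/a²) − 4 a² n² ε² π²))/(2ε), c_n = ∫₀¹ f(x) e^{−b x/(2 a² ε)} sin(n π x) dx − (2ε/√((1 − b²/a²) − 4 a² n² ε² π²)) ∫₀¹ (f(x)/(2ε) − g'(x)) e^{−b x/(2 a² ε)} sin(n π x) dx, d_n the same expression with the minus sign between the two terms replaced by a plus sign, and A_n(x,t) = e^{b x/(2 a² ε)} (c_n e^{α_{n−} t} + d_n e^{α_{n+} t}). Then there exist constants B > 0 and δ > 0, depending only on a, b, max|f| and max|g'|, such that for all m ≥ 1 and 0 < ε ≤ δ/m, all x ∈ [0,1], and all t > 0: |A_{k−m}(x,t)| ≤ (B √ε / √m) · exp( (b/(2 a² ε)) ( x − (a²/b)(1 − √(1 − b²/a² − 4 a² ε² (k−m)² π²)) t ) ). -/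

import Mathlib

/-!
For a mode `n = k - m` below the threshold `k`, the radicand
`D = 1 - b²/a² - 4a²ε²n²π²` stays at least `2aπ√(1 - b²/a²) · εm`: with `c = √(1 - b²/a²)` and
`s = 2aπε`, the floor gives `s k ≤ c`, and then `D = (c - s n)(c + s n) ≥ (s m) c`.
Hence the factor `2ε/√D` in `c_n` and `d_n` is `O(√ε/√m)`. The two weighted sine integrals
from which `c_n` and `d_n` are built are `O(ε)` and `O(1)`, because `∫₀¹ e^{-bx/(2a²ε)} dx ≤ 2a²ε/b`,
and `ε ≤ √ε/√m` as soon as `εm ≤ 1`. Finally `α_{n-} ≤ α_{n+}`, so both exponentials are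
dominated by `e^{α_{n+} t}`, which together with `e^{bx/(2a²ε)}` is the stated exponential.
-/

open Set Real

/-- `α_{n−}` in the Fourier series solution. -/
noncomputable def alphaM (a b ε : ℝ) (n : ℕ) : ℝ :=
  (-1 - Real.sqrt ((1 - b ^ 2 / a ^ 2) - 4 * a ^ 2 * n ^ 2 * ε ^ 2 * Real.pi ^ 2)) / (2 * ε)

/-- `α_{n+}` in the Fourier series solution. -/
noncomputable def alphaP (a b ε : ℝ) (n : ℕ) : ℝ :=
  (-1 + Real.sqrt ((1 - b ^ 2 / a ^ 2) - 4 * a ^ 2 * n ^ 2 * ε ^ 2 * Real.pi ^ 2)) / (2 * ε)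

/-- The coefficient `c_n` of the exponential Fourier modes. -/
noncomputable def cCoef (a b ε : ℝ) (f g : ℝ → ℝ) (n : ℕ) : ℝ :=
  (∫ x in (0:ℝ)..1, f x * Real.exp (-(b * x) / (2 * a ^ 2 * ε)) * Real.sin (n * Real.pi * x))
    - (2 * ε / Real.sqrt ((1 - b ^ 2 / a ^ 2) - 4 * a ^ 2 * n ^ 2 * ε ^ 2 * Real.pi ^ 2)) *
      ∫ x in (0:ℝ)..1, (f x / (2 * ε) - deriv g x) *
        Real.exp (-(b * x) / (2 * a ^ 2 * ε)) * Real.sin (n * Real.pi * x)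

/-- The coefficient `d_n` of the exponential Fourier modes. -/
noncomputable def dCoef (a b ε : ℝ) (f g : ℝ → ℝ) (n : ℕ) : ℝ :=
  (∫ x in (0:ℝ)..1, f x * Real.exp (-(b * x) / (2 * a ^ 2 * ε)) * Real.sin (n * Real.pi * x))
    + (2 * ε / Real.sqrt ((1 - b ^ 2 / a ^ 2) - 4 * a ^ 2 * n ^ 2 * ε ^ 2 * Real.pi ^ 2)) *
      ∫ x in (0:ℝ)..1, (f x / (2 * ε) - deriv g x) *
        Real.exp (-(b * x) / (2 * a ^ 2 * ε)) * Real.sin (n * Real.pi * x)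

/-- The amplitude `A_n(x,t) = e^{bx/(2a²ε)} (c_n e^{α_{n−}t} + d_n e^{α_{n+}t})`. -/
noncomputable def Amp (a b ε : ℝ) (f g : ℝ → ℝ) (n : ℕ) (x t : ℝ) : ℝ :=
  Real.exp (b * x / (2 * a ^ 2 * ε)) *
    (cCoef a b ε f g n * Real.exp (alphaM a b ε n * t)
      + dCoef a b ε f g n * Real.exp (alphaP a b ε n * t))

lemma integral_exp_neg_mul {c : ℝ} (hc : c ≠ 0) :
    ∫ x in (0:ℝ)..1, exp (-(c * x)) = (1 - exp (-c)) / c := by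
  simp_rw [← neg_mul]
  rw [intervalIntegral.integral_comp_mul_left (fun y => exp y) (neg_ne_zero.2 hc), integral_exp,
    mul_one, mul_zero, exp_zero, smul_eq_mul]
  field_simp
  ring

lemma abs_integral_mul_exp_mul_sin_le {F : ℝ → ℝ} {M c : ℝ} (hc : 0 < c)
    (hF : ∀ x ∈ Ioo (0:ℝ) 1, |F x| ≤ M) (ν : ℝ) :
    |∫ x in (0:ℝ)..1, F x * exp (-(c * x)) * sin (ν * x)| ≤ M / c := by
  have hM : 0 ≤ M := (abs_nonneg _).trans (hF (1 / 2) (by norm_num))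
  have hpointwise : ∀ᵐ x, x ∈ Ioc (0:ℝ) 1 →
      ‖F x * exp (-(c * x)) * sin (ν * x)‖ ≤ M * exp (-(c * x)) := by
    filter_upwards [MeasureTheory.Measure.ae_ne _ 1] with x hx1 hx
    rw [Real.norm_eq_abs, abs_mul, abs_mul, abs_exp]
    have hFx := hF x ⟨hx.1, lt_of_le_of_ne hx.2 hx1⟩
    calc |F x| * exp (-(c * x)) * |sin (ν * x)| ≤ M * exp (-(c * x)) * 1 := by
          gcongr; exact abs_sin_le_one _
      _ = M * exp (-(c * x)) := mul_one _
  calc |∫ x in (0:ℝ)..1, F x * exp (-(c * x)) * sin (ν * x)|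
      ≤ ∫ x in (0:ℝ)..1, M * exp (-(c * x)) :=
        intervalIntegral.norm_integral_le_of_norm_le zero_le_one hpointwise
          (Continuous.intervalIntegrable (by fun_prop) _ _)
    _ = M * (1 - exp (-c)) / c := by
        rw [intervalIntegral.integral_const_mul, integral_exp_neg_mul hc.ne', mul_div_assoc]
    _ ≤ M / c := by
        gcongr
        exact mul_le_of_le_one_right hM (by linarith [exp_pos (-c)])

lemma ContDiffOn.exists_abs_deriv_le {g : ℝ → ℝ} {a b : ℝ} (hab : a < b)
    (hg : ContDiffOn ℝ 1 g (Icc a b)) : ∃ M, ∀ x ∈ Ioo a b, |deriv g x| ≤ M := by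
  have hcont : ContinuousOn (derivWithin g (Icc a b)) (Icc a b) :=
    hg.continuousOn_derivWithin (uniqueDiffOn_Icc hab) le_rfl
  obtain ⟨M, hM⟩ := isCompact_Icc.exists_bound_of_continuousOn hcont
  refine ⟨M, fun x hx => ?_⟩
  rw [← derivWithin_of_mem_nhds (Icc_mem_nhds hx.1 hx.2), ← Real.norm_eq_abs]
  exact hM x (Ioo_subset_Icc_self hx)

noncomputable def weightedSine (a b ε : ℝ) (F : ℝ → ℝ) (n : ℕ) : ℝ :=
  ∫ x in (0:ℝ)..1, F x * exp (-(b * x) / (2 * a ^ 2 * ε)) * sin (n * π * x)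

noncomputable def disc (a b ε : ℝ) (n : ℕ) : ℝ :=
  (1 - b ^ 2 / a ^ 2) - 4 * a ^ 2 * n ^ 2 * ε ^ 2 * π ^ 2

lemma abs_weightedSine_le {a b ε M : ℝ} {F : ℝ → ℝ} (ha : a ≠ 0) (hb : 0 < b) (hε : 0 < ε)
    (hF : ∀ x ∈ Ioo (0:ℝ) 1, |F x| ≤ M) (n : ℕ) :
    |weightedSine a b ε F n| ≤ 2 * a ^ 2 * ε * M / b := by
  have hexp : ∀ x, -(b * x) / (2 * a ^ 2 * ε) = -(b / (2 * a ^ 2 * ε) * x) := fun x => by ring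
  unfold weightedSine
  simp_rw [hexp]
  refine (abs_integral_mul_exp_mul_sin_le (by positivity) hF _).trans (le_of_eq ?_)
  field_simp

lemma cCoef_eq (a b ε : ℝ) (f g : ℝ → ℝ) (n : ℕ) :
    cCoef a b ε f g n = weightedSine a b ε f n
      - 2 * ε / √(disc a b ε n) * weightedSine a b ε (fun x => f x / (2 * ε) - deriv g x) n :=
  rfl

lemma dCoef_eq (a b ε : ℝ) (f g : ℝ → ℝ) (n : ℕ) :
    dCoef a b ε f g n = weightedSine a b ε f n
      + 2 * ε / √(disc a b ε n) * weightedSine a b ε (fun x => f x / (2 * ε) - deriv g x) n :=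
  rfl

lemma abs_cCoef_add_abs_dCoef_le {a b ε Mf Mg r ρ : ℝ} {f g : ℝ → ℝ} {n : ℕ}
    (ha : a ≠ 0) (hb : 0 < b) (hε : 0 < ε) (hε1 : ε ≤ 1)
    (hf : ∀ x ∈ Ioo (0:ℝ) 1, |f x| ≤ Mf) (hg : ∀ x ∈ Ioo (0:ℝ) 1, |deriv g x| ≤ Mg)
    (hr : ε ≤ r) (hρ : ε / √(disc a b ε n) ≤ ρ) :
    |cCoef a b ε f g n| + |dCoef a b ε f g n|
      ≤ 4 * a ^ 2 * Mf / b * r + 4 * a ^ 2 * (Mf + 2 * Mg) / b * ρ := by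
  have hMf : 0 ≤ Mf := (abs_nonneg _).trans (hf (1 / 2) (by norm_num))
  have hMg : 0 ≤ Mg := (abs_nonneg _).trans (hg (1 / 2) (by norm_num))
  have hρ0 : 0 ≤ ρ := (div_nonneg hε.le (sqrt_nonneg _)).trans hρ
  set I₁ := weightedSine a b ε f n
  set I₂ := weightedSine a b ε (fun x => f x / (2 * ε) - deriv g x) n
  set J := ε / √(disc a b ε n)
  have hI₁ : |I₁| ≤ 2 * a ^ 2 * ε * Mf / b := abs_weightedSine_le ha hb hε hf n
  have hI₂ : |I₂| ≤ a ^ 2 * (Mf + 2 * Mg) / b := by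
    have hF : ∀ x ∈ Ioo (0:ℝ) 1, |f x / (2 * ε) - deriv g x| ≤ Mf / (2 * ε) + Mg := by
      intro x hx
      calc |f x / (2 * ε) - deriv g x| ≤ |f x / (2 * ε)| + |deriv g x| := abs_sub _ _
        _ = |f x| / (2 * ε) + |deriv g x| := by
            rw [abs_div, abs_of_pos (by positivity : (0:ℝ) < 2 * ε)]
        _ ≤ Mf / (2 * ε) + Mg := by gcongr; exacts [hf x hx, hg x hx]
    calc |I₂| ≤ 2 * a ^ 2 * ε * (Mf / (2 * ε) + Mg) / b := abs_weightedSine_le ha hb hε hF n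
      _ = a ^ 2 * (Mf + 2 * ε * Mg) / b := by field_simp
      _ ≤ a ^ 2 * (Mf + 2 * Mg) / b := by gcongr; nlinarith
  have hsplit : |cCoef a b ε f g n| + |dCoef a b ε f g n| ≤ 2 * |I₁| + 4 * J * |I₂| := by
    have hJ : 2 * ε / √(disc a b ε n) = 2 * J := by simp only [J]; ring
    rw [cCoef_eq, dCoef_eq, hJ]
    have hJ0 : 0 ≤ J := div_nonneg hε.le (sqrt_nonneg _)
    have h₁ := abs_sub I₁ (2 * J * I₂)
    have h₂ := abs_add_le I₁ (2 * J * I₂)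
    rw [abs_mul, abs_of_nonneg (by positivity : 0 ≤ 2 * J)] at h₁ h₂
    linarith
  calc |cCoef a b ε f g n| + |dCoef a b ε f g n| ≤ 2 * |I₁| + 4 * J * |I₂| := hsplit
    _ ≤ 2 * (2 * a ^ 2 * ε * Mf / b) + 4 * ρ * (a ^ 2 * (Mf + 2 * Mg) / b) := by gcongr
    _ = 4 * a ^ 2 * Mf / b * ε + 4 * a ^ 2 * (Mf + 2 * Mg) / b * ρ := by ring
    _ ≤ 4 * a ^ 2 * Mf / b * r + 4 * a ^ 2 * (Mf + 2 * Mg) / b * ρ := by gcongr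

lemma alphaM_le_alphaP {a b ε : ℝ} (hε : 0 < ε) (n : ℕ) : alphaM a b ε n ≤ alphaP a b ε n := by
  unfold alphaM alphaP
  gcongr
  linarith [sqrt_nonneg ((1 - b ^ 2 / a ^ 2) - 4 * a ^ 2 * n ^ 2 * ε ^ 2 * π ^ 2)]

lemma abs_Amp_le {a b ε x t : ℝ} {f g : ℝ → ℝ} {n : ℕ} (hε : 0 < ε) (ht : 0 ≤ t) :
    |Amp a b ε f g n x t| ≤ (|cCoef a b ε f g n| + |dCoef a b ε f g n|)
      * exp (b * x / (2 * a ^ 2 * ε) + alphaP a b ε n * t) := by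
  have hexp : exp (alphaM a b ε n * t) ≤ exp (alphaP a b ε n * t) := by
    gcongr; exact alphaM_le_alphaP hε n
  unfold Amp
  rw [abs_mul, abs_exp, exp_add]
  calc exp (b * x / (2 * a ^ 2 * ε)) * |cCoef a b ε f g n * exp (alphaM a b ε n * t)
        + dCoef a b ε f g n * exp (alphaP a b ε n * t)|
      ≤ exp (b * x / (2 * a ^ 2 * ε)) * (|cCoef a b ε f g n| * exp (alphaP a b ε n * t)
        + |dCoef a b ε f g n| * exp (alphaP a b ε n * t)) := by
        gcongr
        refine (abs_add_le _ _).trans ?_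
        rw [abs_mul, abs_mul, abs_exp, abs_exp]
        gcongr
    _ = _ := by ring

lemma mul_div_add_alphaP_mul_eq {a b ε : ℝ} (ha : a ≠ 0) (hb : b ≠ 0) (hε : ε ≠ 0)
    (n : ℕ) (x t : ℝ) :
    b * x / (2 * a ^ 2 * ε) + alphaP a b ε n * t
      = b / (2 * a ^ 2 * ε) * (x - a ^ 2 / b * (1 - √(disc a b ε n)) * t) := by
  unfold alphaP disc
  field_simp
  ring

lemma mul_mul_le_sq_sub_sq {c s k m : ℝ} (hs : 0 ≤ s) (hm : 0 ≤ m) (hmk : m ≤ k)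
    (hk : s * k ≤ c) : c * (s * m) ≤ c ^ 2 - (s * (k - m)) ^ 2 := by
  have hlow : s * m ≤ c - s * (k - m) := by linarith
  have hhigh : c ≤ c + s * (k - m) := by nlinarith
  have hc : 0 ≤ c := (mul_nonneg hs (hm.trans hmk)).trans hk
  nlinarith [mul_le_mul hlow hhigh hc (hlow.trans' (mul_nonneg hs hm))]

lemma two_mul_pi_mul_floor_le {a b ε : ℝ} (ha : 0 < a) (hε : 0 < ε) :
    2 * a * π * ε * ⌊√(a ^ 2 - b ^ 2) / (2 * a ^ 2 * π * ε)⌋₊ ≤ √(1 - b ^ 2 / a ^ 2) := by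
  have hsqrt : √(a ^ 2 - b ^ 2) = a * √(1 - b ^ 2 / a ^ 2) := by
    rw [← sqrt_sq ha.le, ← sqrt_mul (sq_nonneg a), sqrt_sq ha.le]
    congr 1
    field_simp
  have hfloor : (⌊√(a ^ 2 - b ^ 2) / (2 * a ^ 2 * π * ε)⌋₊ : ℝ) * (2 * a ^ 2 * π * ε)
      ≤ a * √(1 - b ^ 2 / a ^ 2) := by
    rw [← hsqrt, ← le_div_iff₀ (by positivity)]
    exact Nat.floor_le (by positivity)
  refine le_of_mul_le_mul_left ?_ ha
  linarith

lemma disc_sub {a b ε : ℝ} {k m : ℕ} (hmk : m ≤ k) :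
    disc a b ε (k - m) = 1 - b ^ 2 / a ^ 2 - 4 * a ^ 2 * ε ^ 2 * ((k : ℝ) - m) ^ 2 * π ^ 2 := by
  unfold disc
  push_cast [Nat.cast_sub hmk]
  ring

lemma mul_le_disc_floor_sub {a b ε : ℝ} {m : ℕ} (ha : 0 < a) (hba : b ^ 2 ≤ a ^ 2) (hε : 0 < ε)
    (hmk : m ≤ ⌊√(a ^ 2 - b ^ 2) / (2 * a ^ 2 * π * ε)⌋₊) :
    2 * a * π * √(1 - b ^ 2 / a ^ 2) * (ε * m)
      ≤ disc a b ε (⌊√(a ^ 2 - b ^ 2) / (2 * a ^ 2 * π * ε)⌋₊ - m) := by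
  have hsq : √(1 - b ^ 2 / a ^ 2) ^ 2 = 1 - b ^ 2 / a ^ 2 := by
    rw [sq_sqrt (by rwa [sub_nonneg, div_le_one (by positivity)])]
  have hgap := mul_mul_le_sq_sub_sq (s := 2 * a * π * ε) (by positivity) (Nat.cast_nonneg m)
    (Nat.cast_le.2 hmk) (two_mul_pi_mul_floor_le ha hε)
  rw [disc_sub hmk]
  linear_combination hgap + hsq

lemma le_sqrt_div_sqrt_of_mul_le_one {ε m : ℝ} (hε : 0 ≤ ε) (hm : 0 < m) (h : ε * m ≤ 1) :
    ε ≤ √ε / √m := by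
  rw [le_div_iff₀ (sqrt_pos.2 hm)]
  calc ε * √m = √ε * √(ε * m) := by
        rw [sqrt_mul hε, ← mul_assoc, mul_self_sqrt hε]
    _ ≤ √ε * 1 := by gcongr; exact sqrt_le_one.2 h
    _ = √ε := mul_one _

lemma div_sqrt_le_of_mul_le {ε m q D : ℝ} (hε : 0 < ε) (hm : 0 < m) (hq : 0 < q)
    (h : q * (ε * m) ≤ D) : ε / √D ≤ √ε / √m / √q := by
  have hD : √q * (√ε * √m) ≤ √D := by
    rw [← sqrt_mul hε.le, ← sqrt_mul hq.le]
    exact sqrt_le_sqrt h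
  calc ε / √D ≤ ε / (√q * (√ε * √m)) := by gcongr
    _ = √ε / √m / √q := by
        field_simp
        rw [sq_sqrt hε.le]

/-- Bound on the amplitudes of the exponential modes `n = k − m`, where
`k = ⌊√(a² − b²)/(2a²πε)⌋`: there are `B > 0` and `δ > 0`, depending only on `a`, `b`,
`max |f|` and `max |g'|`, such that for all `m ≥ 1`, `0 < ε ≤ δ/m`, `x ∈ [0,1]`, `t > 0`:
`|A_{k−m}(x,t)| ≤ (B√ε/√m) exp((b/(2a²ε)) (x − (a²/b)(1 − √(1 − b²/a² − 4a²ε²(k−m)²π²)) t))`. -/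
theorem lower_modes_bound
    (a b : ℝ) (ha : 0 < a) (hb : 0 < b) (hba : b < a)
    (f g : ℝ → ℝ) (hf : ContinuousOn f (Icc 0 1)) (hg : ContDiffOn ℝ 1 g (Icc 0 1)) :
    ∃ B > (0:ℝ), ∃ δ > (0:ℝ), ∀ m : ℕ, 1 ≤ m → ∀ ε : ℝ, 0 < ε → ε ≤ δ / m →
      ∀ k : ℕ, k = ⌊Real.sqrt (a ^ 2 - b ^ 2) / (2 * a ^ 2 * π * ε)⌋₊ → m < k →
        ∀ x ∈ Icc (0:ℝ) 1, ∀ t : ℝ, 0 < t →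
          |Amp a b ε f g (k - m) x t| ≤ (B * Real.sqrt ε / Real.sqrt m) *
            Real.exp ((b / (2 * a ^ 2 * ε)) *
              (x - (a ^ 2 / b) *
                (1 - Real.sqrt (1 - b ^ 2 / a ^ 2
                  - 4 * a ^ 2 * ε ^ 2 * ((k : ℝ) - m) ^ 2 * π ^ 2)) * t)) := by
  obtain ⟨Mf, hMf⟩ := isCompact_Icc.exists_bound_of_continuousOn hf
  obtain ⟨Mg, hMg⟩ := hg.exists_abs_deriv_le zero_lt_one
  have hf' : ∀ x ∈ Ioo (0:ℝ) 1, |f x| ≤ Mf := fun x hx => hMf x (Ioo_subset_Icc_self hx)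
  have hMf0 : 0 ≤ Mf := (abs_nonneg _).trans (hf' (1 / 2) (by norm_num))
  have hMg0 : 0 ≤ Mg := (abs_nonneg _).trans (hMg (1 / 2) (by norm_num))
  set q := 2 * a * π * √(1 - b ^ 2 / a ^ 2)
  have hba2 : b ^ 2 < a ^ 2 := by gcongr
  have hq : 0 < q := by
    have : 0 < 1 - b ^ 2 / a ^ 2 := by rwa [sub_pos, div_lt_one (by positivity)]
    positivity
  set K := 4 * a ^ 2 * Mf / b + 4 * a ^ 2 * (Mf + 2 * Mg) / b / √q
  refine ⟨K + 1, by positivity, 1, one_pos, ?_⟩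
  rintro m hm ε hε hεm k rfl hmk x - t ht
  have hm0 : (0:ℝ) < m := by exact_mod_cast hm
  have hεm' : ε * m ≤ 1 := by rwa [← le_div_iff₀ hm0]
  have hε1 : ε ≤ 1 := (le_mul_of_one_le_right hε.le (by exact_mod_cast hm)).trans hεm'
  have hr := le_sqrt_div_sqrt_of_mul_le_one hε.le hm0 hεm'
  have hgap := mul_le_disc_floor_sub ha hba2.le hε hmk.le
  have hcoef := abs_cCoef_add_abs_dCoef_le ha.ne' hb hε hε1 hf' hMg hr
    (div_sqrt_le_of_mul_le hε hm0 hq hgap)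
  rw [← disc_sub hmk.le, ← mul_div_add_alphaP_mul_eq ha.ne' hb.ne' hε.ne']
  have hKB : K * (√ε / √m) ≤ (K + 1) * √ε / √m := by
    rw [mul_div_assoc]
    exact mul_le_mul_of_nonneg_right (le_add_of_nonneg_right zero_le_one) (by positivity)
  refine (abs_Amp_le hε ht.le).trans ?_
  gcongr
  exact hcoef.trans (le_of_eq_of_le (by ring) hKB)
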